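/- arXiv:1111.0207 — 3 statements merged into one kernel-verified Lean document; each statement's English description precedes it below -/
import Mathlib

section
/- For α ∈ (0,1), the double integral D(α) = ∫_0^1 ∫_0^1 (a/(1-α) + b^{-α}(1-a))^{-2} db da equals (1-α)/(1+α). -/
/-!
After swapping the order of integration (the integrand is bounded by `1` on the unit square),
the inner integrand is, for fixed `b`, the inverse square of the affine function
`a ↦ a / (1 - α) + b ^ (-α) (1 - a)`. Such an integral over `[0, 1]` is the inverse of the product
of the endpoint values, here `(1 - α) b ^ α`, and `∫₀¹ (1 - α) b ^ α db = (1 - α) / (1 + α)`.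
-/

open Real MeasureTheory Set

lemma mul_add_mul_one_sub_pos {s t a : ℝ} (hs : 0 < s) (ht : 0 < t) (ha₀ : 0 ≤ a) (ha₁ : a ≤ 1) :
    0 < a * s + t * (1 - a) := by
  rcases ha₀.eq_or_lt with rfl | ha₀
  · simpa using ht
  · nlinarith

/-- `a ↦ a / (t (a s + t (1 - a)))` is an antiderivative, also when `s = t`. -/
theorem integral_mul_add_mul_one_sub_zpow_neg_two {s t : ℝ} (hs : 0 < s) (ht : 0 < t) :
    ∫ a in (0:ℝ)..1, (a * s + t * (1 - a)) ^ (-2 : ℤ) = (t * s)⁻¹ := by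
  have hpos : ∀ a ∈ uIcc (0:ℝ) 1, 0 < a * s + t * (1 - a) := by
    intro a ha
    rw [uIcc_of_le zero_le_one] at ha
    exact mul_add_mul_one_sub_pos hs ht ha.1 ha.2
  have hderiv : ∀ a ∈ uIcc (0:ℝ) 1, HasDerivAt (fun a => a / (t * (a * s + t * (1 - a))))
      ((a * s + t * (1 - a)) ^ (-2 : ℤ)) a := by
    intro a ha
    have hL : HasDerivAt (fun a => t * (a * s + t * (1 - a))) (t * (s - t)) a :=
      ((((hasDerivAt_id' a).mul_const s).add
          (((hasDerivAt_id' a).const_sub 1).const_mul t)).const_mul t).congr_deriv (by ring)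
    have hne := (hpos a ha).ne'
    refine ((hasDerivAt_id' a).div hL (by positivity)).congr_deriv ?_
    rw [zpow_neg, zpow_ofNat]
    field_simp
    ring
  have hcont : ContinuousOn (fun a : ℝ => (a * s + t * (1 - a)) ^ (-2 : ℤ)) (uIcc 0 1) :=
    (by fun_prop : Continuous fun a : ℝ => a * s + t * (1 - a)).continuousOn.zpow₀ _
      fun a ha => Or.inl (hpos a ha).ne'
  rw [intervalIntegral.integral_eq_sub_of_hasDerivAt hderiv hcont.intervalIntegrable]
  simp

theorem integrableOn_clustering_integrand {s α : ℝ} (hs : 1 ≤ s) (hα : 0 ≤ α) :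
    IntegrableOn (fun p : ℝ × ℝ => (p.1 * s + p.2 ^ (-α) * (1 - p.1)) ^ (-2 : ℤ))
      (Ioc 0 1 ×ˢ Ioc 0 1) := by
  refine Measure.integrableOn_of_bounded (M := 1) ?_
    (Measurable.aestronglyMeasurable (by fun_prop)) ?_
  · rw [Measure.volume_eq_prod, Measure.prod_prod, Real.volume_Ioc]
    exact ENNReal.mul_ne_top ENNReal.ofReal_ne_top ENNReal.ofReal_ne_top
  rw [ae_restrict_iff' (measurableSet_Ioc.prod measurableSet_Ioc)]
  refine Filter.Eventually.of_forall fun ⟨a, b⟩ ⟨⟨ha₀, ha₁⟩, hb₀, hb₁⟩ => ?_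
  have hb : 1 ≤ b ^ (-α) := one_le_rpow_of_pos_of_le_one_of_nonpos hb₀ hb₁ (by linarith)
  have hden : 1 ≤ a * s + b ^ (-α) * (1 - a) := by nlinarith
  rw [Real.norm_eq_abs, abs_of_nonneg (zpow_nonneg (by linarith) _)]
  exact zpow_le_one_of_nonpos₀ hden (by norm_num)

/-- `D(α) = ∫_0^1 ∫_0^1 (a/(1-α) + b^{-α}(1-a))^{-2} db da = (1-α)/(1+α)`. -/
theorem clustering_double_integral (α : ℝ) (hα0 : 0 < α) (hα1 : α < 1) :
    (∫ a in (0:ℝ)..1, ∫ b in (0:ℝ)..1,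
        (a / (1 - α) + b ^ (-α) * (1 - a)) ^ (-2 : ℤ)) = (1 - α) / (1 + α) := by
  have hs : 1 ≤ (1 - α)⁻¹ := one_le_inv₀ (by linarith) |>.2 (by linarith)
  have hinner : ∀ b ∈ Ioc (0:ℝ) 1,
      ∫ a in Ioc (0:ℝ) 1, (a * (1 - α)⁻¹ + b ^ (-α) * (1 - a)) ^ (-2 : ℤ) = (1 - α) * b ^ α := by
    intro b hb
    rw [← intervalIntegral.integral_of_le zero_le_one,
      integral_mul_add_mul_one_sub_zpow_neg_two (by linarith) (rpow_pos_of_pos hb.1 _),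
      mul_inv, inv_inv, rpow_neg hb.1.le, inv_inv, mul_comm]
  simp_rw [div_eq_mul_inv, intervalIntegral.integral_of_le zero_le_one]
  rw [integral_integral_swap (by
      rw [Measure.prod_restrict]; exact integrableOn_clustering_integrand hs hα0.le),
    setIntegral_congr_fun measurableSet_Ioc hinner, ← intervalIntegral.integral_of_le zero_le_one,
    intervalIntegral.integral_const_mul, integral_rpow (Or.inl (by linarith)),
    zero_rpow (by linarith), one_rpow, add_comm α]
  field_simp
  ring
end

section
/- Expander mixing lemma for the normalized Laplacian: if G is a graph with normalized Laplacian eigenvalues 0 = λ_0 ≤ λ_1 ≤ ⋯ ≤ λ_{n-1} and spectral gap λ = max{|λ_1 - 1|, |λ_{n-1} - 1|}, then for every vertex subset X, |e(X,X) - vol(X)^2/vol(G)| ≤ λ · vol(X)·vol(X̄)/vol(G). -/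
/-!
Put `x = D^{1/2} 1_S` and `φ = D^{1/2} 1`, so that `x ⬝ x = φ ⬝ x = vol S`, `φ ⬝ φ = vol G`,
`x ⬝ (I - L) x = e(S,S)` and `L φ = 0`. Removing from `x` its component along `φ` leaves `y ⊥ φ`
with `y ⬝ y = vol S · vol S̄ / vol G` and `y ⬝ (I - L) y = e(S,S) - vol(S)² / vol G`.
In an orthonormal eigenbasis of `L`, every eigenvector not orthogonal to `y` has its eigenvalue
in `[μ 1, μ (n-1)]`: the eigenvector of a simple eigenvalue `0` is parallel to `φ ⊥ y`.
Hence `|y ⬝ (I - L) y| ≤ λ · y ⬝ y`.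
-/

open Finset Matrix Polynomial

lemma Monotone.apply_mem_Icc_or_unique_of_map_eq {α ι : Type*} [Preorder α] [Fintype ι]
    {n : ℕ} (hn : 2 ≤ n) {μ : Fin n → α} (hμ : Monotone μ) {ν : ι → α}
    (h : univ.val.map ν = univ.val.map μ) (i : ι) :
    ν i ∈ Set.Icc (μ ⟨1, by omega⟩) (μ ⟨n - 1, by omega⟩) ∨
      (ν i = μ ⟨0, by omega⟩ ∧ ∀ j ≠ i, ν j ≠ ν i) := by
  classical
  have hcard : ∀ a, #{j | a = ν j} = #{k | a = μ k} := fun a => by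
    have := congrArg (Multiset.count a) h
    rwa [Multiset.count_map, Multiset.count_map] at this
  obtain ⟨k, -, hk⟩ := Multiset.mem_map.mp (h ▸ Multiset.mem_map_of_mem ν (mem_univ i))
  have hle_last : ν i ≤ μ ⟨n - 1, by omega⟩ :=
    hk ▸ hμ (Fin.le_def.mpr (Nat.le_sub_one_of_lt k.isLt))
  have hge_one : ∀ k' : Fin n, k'.val ≠ 0 → μ ⟨1, by omega⟩ ≤ μ k' := fun k' hk' =>
    hμ (Fin.le_def.mpr (by simp only; omega))
  by_cases hk0 : k.val = 0
  · by_cases hrep : ∃ j ≠ i, ν j = ν i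
    · obtain ⟨j, hji, hj⟩ := hrep
      have htwo : 1 < #{k | ν i = μ k} := by
        rw [← hcard]
        exact one_lt_card.mpr ⟨i, by simp, j, by simp [hj], hji.symm⟩
      obtain ⟨k', hk', hk'k⟩ := exists_mem_ne htwo k
      refine .inl ⟨?_, hle_last⟩
      rw [(mem_filter.mp hk').2]
      exact hge_one k' fun h' => hk'k (Fin.ext (by omega))
    · push Not at hrep
      exact .inr ⟨by rw [← hk]; exact congrArg μ (Fin.ext hk0), hrep⟩
  · exact .inl ⟨hk ▸ hge_one k hk0, hle_last⟩

lemma OrthonormalBasis.sum_dotProduct_mul_dotProduct {ι n : Type*} [Fintype ι] [Fintype n]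
    (b : OrthonormalBasis ι ℝ (EuclideanSpace ℝ n)) (x y : n → ℝ) :
    ∑ i, (⇑(b i) ⬝ᵥ x) * (⇑(b i) ⬝ᵥ y) = x ⬝ᵥ y := by
  have := b.sum_inner_mul_inner (WithLp.toLp 2 x) (WithLp.toLp 2 y)
  simp only [EuclideanSpace.inner_eq_star_dotProduct, star_trivial] at this
  simpa only [dotProduct_comm y] using this

namespace Matrix.IsHermitian

variable {n : Type*} [Fintype n] {L : Matrix n n ℝ} (hL : L.IsHermitian)
include hL

lemma dotProduct_mulVec_comm (x y : n → ℝ) : x ⬝ᵥ (L *ᵥ y) = (L *ᵥ x) ⬝ᵥ y := by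
  rw [dotProduct_mulVec, ← mulVec_transpose, ← conjTranspose_eq_transpose_of_trivial, hL.eq]

variable [DecidableEq n]

lemma eigenvectorBasis_dotProduct_mulVec (i : n) (x : n → ℝ) :
    ⇑(hL.eigenvectorBasis i) ⬝ᵥ (L *ᵥ x) = hL.eigenvalues i * (⇑(hL.eigenvectorBasis i) ⬝ᵥ x) := by
  rw [hL.dotProduct_mulVec_comm, hL.mulVec_eigenvectorBasis, smul_dotProduct, smul_eq_mul]

lemma dotProduct_mulVec_eq_sum_eigenvalues (x : n → ℝ) :
    x ⬝ᵥ (L *ᵥ x) = ∑ i, hL.eigenvalues i * (⇑(hL.eigenvectorBasis i) ⬝ᵥ x) ^ 2 := by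
  rw [← hL.eigenvectorBasis.sum_dotProduct_mul_dotProduct]
  refine sum_congr rfl fun i _ => ?_
  rw [hL.eigenvectorBasis_dotProduct_mulVec]
  ring

lemma abs_sub_dotProduct_mulVec_le {lam : ℝ} {y : n → ℝ}
    (hy : ∀ i, ⇑(hL.eigenvectorBasis i) ⬝ᵥ y = 0 ∨ |1 - hL.eigenvalues i| ≤ lam) :
    |y ⬝ᵥ y - y ⬝ᵥ (L *ᵥ y)| ≤ lam * (y ⬝ᵥ y) := by
  set c : n → ℝ := fun i => ⇑(hL.eigenvectorBasis i) ⬝ᵥ y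
  have hyy : y ⬝ᵥ y = ∑ i, c i ^ 2 := by
    rw [← hL.eigenvectorBasis.sum_dotProduct_mul_dotProduct]
    simp only [c, sq]
  rw [hL.dotProduct_mulVec_eq_sum_eigenvalues, hyy, ← sum_sub_distrib, mul_sum]
  refine (abs_sum_le_sum_abs _ _).trans (sum_le_sum fun i _ => ?_)
  rw [← one_sub_mul, abs_mul, abs_of_nonneg (sq_nonneg (c i))]
  rcases hy i with h | h
  · simp [c, h]
  · exact mul_le_mul_of_nonneg_right h (sq_nonneg _)

lemma eigenvectorBasis_dotProduct_eq_zero_of_forall_ne {φ y : n → ℝ} (hφ : φ ≠ 0)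
    (hLφ : L *ᵥ φ = 0) (hφy : φ ⬝ᵥ y = 0) {i : n}
    (hsimple : ∀ j ≠ i, hL.eigenvalues j ≠ 0) :
    ⇑(hL.eigenvectorBasis i) ⬝ᵥ y = 0 := by
  set b := hL.eigenvectorBasis
  have hb : ∀ j ≠ i, ⇑(b j) ⬝ᵥ φ = 0 := fun j hj => by
    have := hL.eigenvectorBasis_dotProduct_mulVec j φ
    rw [hLφ, dotProduct_zero, eq_comm, mul_eq_zero] at this
    exact this.resolve_left (hsimple j hj)
  have hsingle : ∀ z, φ ⬝ᵥ z = (⇑(b i) ⬝ᵥ φ) * (⇑(b i) ⬝ᵥ z) := fun z => by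
    rw [← b.sum_dotProduct_mul_dotProduct,
      sum_eq_single i (fun j _ hj => by rw [hb j hj, zero_mul]) (by simp)]
  have hbi : ⇑(b i) ⬝ᵥ φ ≠ 0 := fun h => hφ (by
    rw [← dotProduct_self_eq_zero, hsingle, h, zero_mul])
  rw [hsingle, mul_eq_zero] at hφy
  exact hφy.resolve_left hbi

lemma map_eigenvalues_eq_of_charpoly_eq {ι : Type*} [Fintype ι] {μ : ι → ℝ}
    (h : L.charpoly = ∏ i, (X - C (μ i))) :
    univ.val.map hL.eigenvalues = univ.val.map μ := by
  have hroots := hL.roots_charpoly_eq_eigenvalues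
  rw [h, roots_prod _ _ (prod_ne_zero_iff.mpr fun i _ => X_sub_C_ne_zero _)] at hroots
  simpa using hroots.symm

theorem abs_sub_dotProduct_mulVec_sub_sq_div_le {φ : n → ℝ} (hφ : φ ≠ 0) (hLφ : L *ᵥ φ = 0)
    {lam : ℝ} (hν : ∀ i, |1 - hL.eigenvalues i| ≤ lam ∨ ∀ j ≠ i, hL.eigenvalues j ≠ 0)
    (x : n → ℝ) :
    |x ⬝ᵥ x - x ⬝ᵥ (L *ᵥ x) - (φ ⬝ᵥ x) ^ 2 / (φ ⬝ᵥ φ)| ≤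
      lam * (x ⬝ᵥ x - (φ ⬝ᵥ x) ^ 2 / (φ ⬝ᵥ φ)) := by
  have hφφ : φ ⬝ᵥ φ ≠ 0 := fun h => hφ (dotProduct_self_eq_zero.mp h)
  set y := x - ((φ ⬝ᵥ x) / (φ ⬝ᵥ φ)) • φ with hy
  have hφy : φ ⬝ᵥ y = 0 := by
    rw [dotProduct_sub, dotProduct_smul, smul_eq_mul, div_mul_cancel₀ _ hφφ, sub_self]
  have hLy : L *ᵥ y = L *ᵥ x := by rw [mulVec_sub, mulVec_smul, hLφ, smul_zero, sub_zero]
  have hφLx : φ ⬝ᵥ (L *ᵥ x) = 0 := by rw [hL.dotProduct_mulVec_comm, hLφ, zero_dotProduct]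
  have hyLy : y ⬝ᵥ (L *ᵥ y) = x ⬝ᵥ (L *ᵥ x) := by
    rw [hLy, sub_dotProduct, smul_dotProduct, hφLx, smul_zero, sub_zero]
  have hyy : y ⬝ᵥ y = x ⬝ᵥ x - (φ ⬝ᵥ x) ^ 2 / (φ ⬝ᵥ φ) := by
    simp only [hy, sub_dotProduct, dotProduct_sub, smul_dotProduct, dotProduct_smul, smul_eq_mul,
      dotProduct_comm x φ]
    field_simp
    ring
  rw [← hyy, sub_right_comm, ← hyy, ← hyLy]
  refine hL.abs_sub_dotProduct_mulVec_le fun i => (hν i).symm.imp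
    (hL.eigenvectorBasis_dotProduct_eq_zero_of_forall_ne hφ hLφ hφy) id

end Matrix.IsHermitian

lemma Real.rpow_neg_half_eq_inv_sqrt {x : ℝ} (hx : 0 ≤ x) : x ^ (-(1 / 2) : ℝ) = (√x)⁻¹ := by
  rw [Real.rpow_neg hx, Real.sqrt_eq_rpow]

namespace SimpleGraph

variable {V : Type*} [Fintype V] [DecidableEq V] (G : SimpleGraph V) [DecidableRel G.Adj]

noncomputable def invSqrtDegree : Matrix V V ℝ :=
  diagonal fun v => (G.degree v : ℝ) ^ (-(1 / 2) : ℝ)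

noncomputable def normalizedLaplacian : Matrix V V ℝ :=
  1 - G.invSqrtDegree * G.adjMatrix ℝ * G.invSqrtDegree

lemma isHermitian_normalizedLaplacian : G.normalizedLaplacian.IsHermitian := by
  simp only [isHermitian_iff_isSymm, normalizedLaplacian, invSqrtDegree, IsSymm, transpose_sub,
    transpose_one, transpose_mul, diagonal_transpose, transpose_adjMatrix, mul_assoc]

noncomputable def sqrtDegreeOn (S : Finset V) (v : V) : ℝ :=
  if v ∈ S then √(G.degree v) else 0

lemma sqrtDegreeOn_dotProduct_sqrtDegreeOn (S T : Finset V) :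
    G.sqrtDegreeOn S ⬝ᵥ G.sqrtDegreeOn T = ∑ v ∈ S ∩ T, (G.degree v : ℝ) := by
  simp only [dotProduct, sqrtDegreeOn, ite_mul, mul_ite, mul_zero, zero_mul,
    Real.mul_self_sqrt (Nat.cast_nonneg _), ← ite_and, ← mem_inter, sum_ite_mem, univ_inter,
    inter_comm T]

variable {G} (hdeg : ∀ v, 0 < G.degree v)
include hdeg

lemma invSqrtDegree_mulVec_sqrtDegreeOn (S : Finset V) :
    G.invSqrtDegree *ᵥ G.sqrtDegreeOn S = fun v => if v ∈ S then 1 else 0 := by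
  ext v
  have hd : (0 : ℝ) < G.degree v := Nat.cast_pos.mpr (hdeg v)
  simp only [invSqrtDegree, mulVec_diagonal, sqrtDegreeOn, Real.rpow_neg_half_eq_inv_sqrt hd.le,
    mul_ite, mul_zero, inv_mul_cancel₀ (Real.sqrt_pos.mpr hd).ne']

lemma sqrtDegreeOn_univ_ne_zero [Nonempty V] : G.sqrtDegreeOn univ ≠ 0 := fun h => by
  obtain ⟨v⟩ := ‹Nonempty V›
  simpa [sqrtDegreeOn, (hdeg v).ne'] using congrFun h v

lemma normalizedLaplacian_mulVec_sqrtDegreeOn_univ :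
    G.normalizedLaplacian *ᵥ G.sqrtDegreeOn univ = 0 := by
  ext v
  have hd : (0 : ℝ) < G.degree v := Nat.cast_pos.mpr (hdeg v)
  have hconst : (fun v => if v ∈ (univ : Finset V) then (1 : ℝ) else 0) = Function.const V 1 := by
    ext; simp
  simp only [normalizedLaplacian, sub_mulVec, one_mulVec, ← mulVec_mulVec,
    invSqrtDegree_mulVec_sqrtDegreeOn hdeg, hconst, Pi.sub_apply, Pi.zero_apply]
  rw [invSqrtDegree, mulVec_diagonal, adjMatrix_mulVec_const_apply, mul_one,
    Real.rpow_neg_half_eq_inv_sqrt hd.le, sqrtDegreeOn, if_pos (mem_univ v)]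
  nth_rewrite 3 [← Real.mul_self_sqrt hd.le]
  rw [inv_mul_cancel_left₀ (Real.sqrt_pos.mpr hd).ne', sub_self]

lemma sqrtDegreeOn_dotProduct_sub_normalizedLaplacian (S : Finset V) :
    G.sqrtDegreeOn S ⬝ᵥ G.sqrtDegreeOn S -
        G.sqrtDegreeOn S ⬝ᵥ (G.normalizedLaplacian *ᵥ G.sqrtDegreeOn S) =
      ∑ u ∈ S, ∑ v ∈ S, G.adjMatrix ℝ u v := by
  have hsymm : ∀ x y : V → ℝ, x ⬝ᵥ (G.invSqrtDegree *ᵥ y) = (G.invSqrtDegree *ᵥ x) ⬝ᵥ y :=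
    fun x y => by
      simp only [dotProduct, invSqrtDegree, mulVec_diagonal]
      exact sum_congr rfl fun _ _ => by ring
  rw [normalizedLaplacian, sub_mulVec, one_mulVec, dotProduct_sub, sub_sub_cancel,
    ← mulVec_mulVec, ← mulVec_mulVec, hsymm, invSqrtDegree_mulVec_sqrtDegreeOn hdeg]
  simp only [dotProduct, mulVec, ite_mul, mul_ite, one_mul, mul_one, zero_mul, mul_zero,
    sum_ite_mem, univ_inter]

end SimpleGraph

/-- Expander mixing lemma for the normalized Laplacian. `μ` lists the
eigenvalues of `L = I - D^{-1/2} A D^{-1/2}` in nondecreasing order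
(`μ 0 = 0`), and `lam = max{|μ 1 - 1|, |μ (n-1) - 1|}` is the spectral gap.
Then for every vertex subset `X`,
`|e(X,X) - vol(X)²/vol(G)| ≤ lam · vol(X) · vol(X̄) / vol(G)`. -/
theorem expander_mixing_lemma
    {V : Type*} [Fintype V] [DecidableEq V]
    (G : SimpleGraph V) [DecidableRel G.Adj]
    (hdeg : ∀ v, 0 < G.degree v)
    (hn : 2 ≤ Fintype.card V)
    (μ : Fin (Fintype.card V) → ℝ) (hmono : Monotone μ)
    (hchar :
      (1 - (Matrix.diagonal fun v => ((G.degree v : ℝ)) ^ (-(1/2) : ℝ)) *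
          (G.adjMatrix ℝ) *
          (Matrix.diagonal fun v => ((G.degree v : ℝ)) ^ (-(1/2) : ℝ))).charpoly
        = ∏ i, (X - C (μ i)))
    (hμ0 : μ ⟨0, by omega⟩ = 0)
    (lam : ℝ)
    (hlam : lam = max |μ ⟨1, by omega⟩ - 1| |μ ⟨Fintype.card V - 1, by omega⟩ - 1|) :
    ∀ S : Finset V,
      |(∑ u ∈ S, ∑ v ∈ S, (G.adjMatrix ℝ) u v)
          - (∑ v ∈ S, (G.degree v : ℝ)) ^ 2 / (∑ v, (G.degree v : ℝ))|
        ≤ lam * (∑ v ∈ S, (G.degree v : ℝ)) * (∑ v ∈ Sᶜ, (G.degree v : ℝ))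
            / (∑ v, (G.degree v : ℝ)) := by
  intro S
  have hL := G.isHermitian_normalizedLaplacian
  have hν : ∀ i, |1 - hL.eigenvalues i| ≤ lam ∨ ∀ j ≠ i, hL.eigenvalues j ≠ 0 := fun i =>
    (hmono.apply_mem_Icc_or_unique_of_map_eq hn (hL.map_eigenvalues_eq_of_charpoly_eq hchar) i).imp
      (fun h => by
        rw [hlam, abs_sub_comm]
        exact abs_le_max_abs_abs (sub_le_sub_right h.1 1) (sub_le_sub_right h.2 1))
      (fun h j hj => by simpa [h.1, hμ0] using h.2 j hj)
  have : Nonempty V := Fintype.card_pos_iff.mp (by omega)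
  have key := hL.abs_sub_dotProduct_mulVec_sub_sq_div_le
    (SimpleGraph.sqrtDegreeOn_univ_ne_zero hdeg)
    (SimpleGraph.normalizedLaplacian_mulVec_sqrtDegreeOn_univ hdeg) hν (G.sqrtDegreeOn S)
  rw [SimpleGraph.sqrtDegreeOn_dotProduct_sub_normalizedLaplacian hdeg] at key
  simp only [SimpleGraph.sqrtDegreeOn_dotProduct_sqrtDegreeOn, inter_self, univ_inter] at key
  have hvol : (∑ v, (G.degree v : ℝ)) ≠ 0 :=
    (sum_pos (fun v _ => Nat.cast_pos.mpr (hdeg v)) univ_nonempty).ne'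
  refine key.trans_eq ?_
  rw [← sum_add_sum_compl S] at hvol ⊢
  field_simp
  ring
end

section
/- Geometric series tail estimate: for α ∈ (0,1), β ∈ (0,1-α), m with m = o(log n), and I = (1/2)·log₂ n - 2·log₂ log n, the sum ∑_{i=1}^{I} (2^i·√n·log² n)^{1 - (m+1)α/m} · n^{1 - (m+1)β/m} is o(n^{2-α-β}) as n → ∞. -/
/-!
Write `B_i = 2^i √n log² n`, `e = 1 - (m+1)α/m`, `f = 1 - (m+1)β/m` and `δ = (1-α)/2`; the cutoff
`I` is chosen so that `√n ≤ B_i ≤ n` for `1 ≤ i ≤ I`. If `e ≥ δ`, the sum is geometric with ratio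
`2^e ≥ 2^δ > 1`, hence at most a constant times its last term, which is `≤ n^(e+f) =
n^(2-α-β) · n^(-(α+β)/m)`; since `m = o(log n)` this factor tends to `0`. If `e < δ`, every term is
at most `n^(max(e, e/2) + f) ≤ n^(2-α-β-δ)` and there are at most `log n` terms.
-/

open Filter Asymptotics Real Topology Finset

-- `2^i √x log² x ≤ x` exactly for `i ≤ (1/2) log₂ x - 2 log₂ log x`.
noncomputable def cutoffIndex (x : ℝ) : ℕ := ⌊(1 / 2) * logb 2 x - 2 * logb 2 (log x)⌋₊

noncomputable def cutSum (e f x : ℝ) : ℝ :=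
  ∑ i ∈ Icc 1 (cutoffIndex x), ((2 : ℝ) ^ i * √x * log x ^ 2) ^ e * x ^ f

lemma cutSum_nonneg (e f : ℝ) {x : ℝ} (hx : 0 ≤ x) : 0 ≤ cutSum e f x :=
  sum_nonneg fun i _ => by positivity

lemma one_le_log_of_three_le {x : ℝ} (hx : 3 ≤ x) : 1 ≤ log x := by
  rw [le_log_iff_exp_le (by linarith)]
  linarith [exp_one_lt_d9]

lemma two_rpow_cutoff_mul_sqrt_mul_log_sq {x : ℝ} (hx : 1 < x) :
    (2 : ℝ) ^ ((1 / 2) * logb 2 x - 2 * logb 2 (log x)) * (√x * log x ^ 2) = x := by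
  have hx0 : 0 < x := by linarith
  have hL : 0 < log x := log_pos hx
  rw [rpow_sub two_pos, mul_comm (1 / 2 : ℝ), mul_comm (2 : ℝ), rpow_mul zero_le_two,
    rpow_mul zero_le_two, rpow_logb two_pos (by norm_num) hx0, rpow_logb two_pos (by norm_num) hL,
    ← sqrt_eq_rpow, rpow_two]
  field_simp
  exact sq_sqrt hx0.le

lemma two_pow_mul_sqrt_mul_log_sq_le {x : ℝ} (hx : 1 < x) {i : ℕ} (hi : 1 ≤ i)
    (hiN : i ≤ cutoffIndex x) : (2 : ℝ) ^ i * √x * log x ^ 2 ≤ x := by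
  have hpos : 1 ≤ (1 / 2) * logb 2 x - 2 * logb 2 (log x) := Nat.floor_pos.mp (hi.trans hiN)
  calc (2 : ℝ) ^ i * √x * log x ^ 2 = (2 : ℝ) ^ (i : ℝ) * (√x * log x ^ 2) := by
        rw [rpow_natCast, mul_assoc]
    _ ≤ 2 ^ ((1 / 2) * logb 2 x - 2 * logb 2 (log x)) * (√x * log x ^ 2) := by
        gcongr
        · exact one_le_two
        · exact (Nat.cast_le.2 hiN).trans (Nat.floor_le (by linarith))
    _ = x := two_rpow_cutoff_mul_sqrt_mul_log_sq hx

lemma cutoffIndex_le_log {x : ℝ} (hx : 3 ≤ x) : (cutoffIndex x : ℝ) ≤ log x := by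
  have hL := one_le_log_of_three_le hx
  have hlogb : 0 ≤ logb 2 (log x) := logb_nonneg one_lt_two hL
  have hhalf : (1 / 2) * logb 2 x ≤ log x := by
    rw [logb, show (1 / 2) * (log x / log 2) = log x / (2 * log 2) by ring]
    exact div_le_self (by linarith) (by linarith [log_two_gt_d9])
  calc (cutoffIndex x : ℝ) ≤ ⌊log x⌋₊ := Nat.cast_le.2 (Nat.floor_le_floor (by linarith))
    _ ≤ log x := Nat.floor_le (by linarith)

lemma rpow_le_rpow_max_half {x B : ℝ} (hx : 1 ≤ x) (hxB : √x ≤ B) (hBx : B ≤ x) (e : ℝ) :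
    B ^ e ≤ x ^ max e (e / 2) := by
  have hs : 0 < √x := sqrt_pos.2 (by linarith)
  rcases le_total 0 e with he | he
  · calc B ^ e ≤ x ^ e := rpow_le_rpow (hs.le.trans hxB) hBx he
      _ ≤ x ^ max e (e / 2) := rpow_le_rpow_of_exponent_le hx (le_max_left _ _)
  · calc B ^ e ≤ √x ^ e := rpow_le_rpow_of_nonpos hs hxB he
      _ = x ^ (e / 2) := by rw [sqrt_eq_rpow, ← rpow_mul (by linarith)]; ring_nf
      _ ≤ x ^ max e (e / 2) := rpow_le_rpow_of_exponent_le hx (le_max_right _ _)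

lemma geom_sum_Icc_one_le {y : ℝ} (hy : 1 < y) (N : ℕ) :
    ∑ i ∈ Icc 1 N, y ^ i ≤ y ^ N / (1 - y⁻¹) := by
  have hy0 : 0 < y - 1 := by linarith
  have hsum := geom_sum_Ico_mul y (Nat.le_add_left 1 N)
  rw [Ico_add_one_right_eq_Icc] at hsum
  rw [show y ^ N / (1 - y⁻¹) = y ^ (N + 1) / (y - 1) by field_simp; ring, le_div_iff₀ hy0, hsum]
  linarith [pow_pos (by linarith : 0 < y) 1]

lemma pow_mul_rpow {a b : ℝ} (hb : 0 ≤ b) (ha : 0 ≤ a) (i : ℕ) (e : ℝ) :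
    (b ^ i * a) ^ e = (b ^ e) ^ i * a ^ e := by
  rw [mul_rpow (pow_nonneg hb i) ha, ← rpow_natCast_mul hb, mul_comm (i : ℝ), rpow_mul_natCast hb]

lemma cutSum_le_log_mul_rpow {e f γ x : ℝ} (hx : 3 ≤ x) (hγ : max e (e / 2) + f ≤ γ) :
    cutSum e f x ≤ log x * x ^ γ := by
  have hx1 : 1 ≤ x := by linarith
  have hL := one_le_log_of_three_le hx
  have hterm : ∀ i ∈ Icc 1 (cutoffIndex x),
      ((2 : ℝ) ^ i * √x * log x ^ 2) ^ e * x ^ f ≤ x ^ γ := by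
    intro i hi
    obtain ⟨hi1, hiN⟩ := mem_Icc.1 hi
    have hsqrt : √x ≤ 2 ^ i * √x * log x ^ 2 := by
      have : 1 ≤ (2 : ℝ) ^ i * log x ^ 2 :=
        one_le_mul_of_one_le_of_one_le (one_le_pow₀ one_le_two) (one_le_pow₀ hL)
      nlinarith [sqrt_nonneg x]
    calc ((2 : ℝ) ^ i * √x * log x ^ 2) ^ e * x ^ f ≤ x ^ max e (e / 2) * x ^ f := by
          gcongr
          exact rpow_le_rpow_max_half hx1 hsqrt
            (two_pow_mul_sqrt_mul_log_sq_le (by linarith) hi1 hiN) e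
      _ = x ^ (max e (e / 2) + f) := (rpow_add (by linarith) _ _).symm
      _ ≤ x ^ γ := rpow_le_rpow_of_exponent_le hx1 hγ
  calc cutSum e f x ≤ #(Icc 1 (cutoffIndex x)) • x ^ γ := sum_le_card_nsmul _ _ _ hterm
    _ = cutoffIndex x * x ^ γ := by simp [nsmul_eq_mul]
    _ ≤ log x * x ^ γ := by gcongr; exact cutoffIndex_le_log hx

lemma cutSum_le_rpow_add_div {δ e f x : ℝ} (hx : 3 ≤ x) (hδ : 0 < δ) (he : δ ≤ e) :
    cutSum e f x ≤ x ^ (e + f) / (1 - 2 ^ (-δ)) := by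
  have hx0 : 0 < x := by linarith
  have hy : 1 < (2 : ℝ) ^ e := one_lt_rpow one_lt_two (by linarith)
  have hC : 0 < 1 - (2 : ℝ) ^ (-δ) :=
    sub_pos.2 (rpow_lt_one_of_one_lt_of_neg one_lt_two (by linarith))
  obtain hN | hN := Nat.eq_zero_or_pos (cutoffIndex x)
  · simp only [cutSum, hN, Icc_eq_empty_of_lt zero_lt_one, sum_empty]
    positivity
  have hA : 0 ≤ √x * log x ^ 2 := by positivity
  calc cutSum e f x
      = (∑ i ∈ Icc 1 (cutoffIndex x), ((2 : ℝ) ^ e) ^ i) * ((√x * log x ^ 2) ^ e * x ^ f) := by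
        simp only [cutSum, sum_mul, mul_assoc, pow_mul_rpow zero_le_two hA]
    _ ≤ ((2 : ℝ) ^ e) ^ cutoffIndex x / (1 - ((2 : ℝ) ^ e)⁻¹)
          * ((√x * log x ^ 2) ^ e * x ^ f) := by
        gcongr
        exact geom_sum_Icc_one_le hy _
    _ ≤ ((2 : ℝ) ^ e) ^ cutoffIndex x / (1 - 2 ^ (-δ)) * ((√x * log x ^ 2) ^ e * x ^ f) := by
        gcongr
        rw [← rpow_neg zero_le_two]
        exact rpow_le_rpow_of_exponent_le one_le_two (by linarith)
    _ = (2 ^ cutoffIndex x * (√x * log x ^ 2)) ^ e * x ^ f / (1 - 2 ^ (-δ)) := by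
        rw [pow_mul_rpow zero_le_two hA]
        ring
    _ ≤ x ^ e * x ^ f / (1 - 2 ^ (-δ)) := by
        have hB : 2 ^ cutoffIndex x * (√x * log x ^ 2) ≤ x := by
          rw [← mul_assoc]
          exact two_pow_mul_sqrt_mul_log_sq_le (by linarith) hN le_rfl
        gcongr
        linarith
    _ = x ^ (e + f) / (1 - 2 ^ (-δ)) := by rw [rpow_add hx0]

lemma cutSum_le {α β m x : ℝ} (hα1 : α < 1) (hβ0 : 0 ≤ β) (hm : 0 < m) (hx : 3 ≤ x) :
    cutSum (1 - (m + 1) * α / m) (1 - (m + 1) * β / m) x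
      ≤ (log x / x ^ ((1 - α) / 2)
          + x ^ (-((α + β) / m)) / (1 - 2 ^ (-((1 - α) / 2)))) * x ^ (2 - α - β) := by
  have hx0 : 0 < x := by linarith
  have hC : 0 < 1 - (2 : ℝ) ^ (-((1 - α) / 2)) :=
    sub_pos.2 (rpow_lt_one_of_one_lt_of_neg one_lt_two (by linarith))
  have hL : 0 ≤ log x := log_nonneg (by linarith)
  have hβm : 0 ≤ β / m := div_nonneg hβ0 hm.le
  rw [show 1 - (m + 1) * α / m = 1 - α - α / m by field_simp; ring,
    show 1 - (m + 1) * β / m = 1 - β - β / m by field_simp; ring]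
  rcases lt_or_ge (1 - α - α / m) ((1 - α) / 2) with hsmall | hlarge
  · calc cutSum (1 - α - α / m) (1 - β - β / m) x
        ≤ log x * x ^ (2 - α - β - (1 - α) / 2) := by
          refine cutSum_le_log_mul_rpow hx ?_
          have := max_lt hsmall (show (1 - α - α / m) / 2 < (1 - α) / 2 by linarith)
          linarith
      _ = log x / x ^ ((1 - α) / 2) * x ^ (2 - α - β) := by
          rw [rpow_sub hx0]
          ring
      _ ≤ _ := by
          gcongr
          exact le_add_of_nonneg_right (by positivity)
  · calc cutSum (1 - α - α / m) (1 - β - β / m) x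
        ≤ x ^ (1 - α - α / m + (1 - β - β / m)) / (1 - 2 ^ (-((1 - α) / 2))) :=
          cutSum_le_rpow_add_div hx (by linarith) hlarge
      _ = x ^ (-((α + β) / m)) / (1 - 2 ^ (-((1 - α) / 2))) * x ^ (2 - α - β) := by
          rw [div_mul_eq_mul_div, ← rpow_add hx0]
          ring_nf
      _ ≤ _ := by
          gcongr
          exact le_add_of_nonneg_left (by positivity)

lemma tendsto_div_atTop_of_isLittleO {ι : Type*} {l : Filter ι} {f g : ι → ℝ}
    (hf : ∀ᶠ i in l, 0 < f i) (hg : ∀ᶠ i in l, 0 < g i) (h : f =o[l] g) :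
    Tendsto (fun i => g i / f i) l atTop := by
  have hpos : Tendsto (fun i => f i / g i) l (𝓝[>] 0) :=
    tendsto_nhdsWithin_iff.2 ⟨h.tendsto_div_nhds_zero, by
      filter_upwards [hf, hg] with i hfi hgi using div_pos hfi hgi⟩
  exact hpos.inv_tendsto_nhdsGT_zero.congr fun i => inv_div (f i) (g i)

lemma tendsto_natCast_rpow_neg_div {c : ℝ} (hc : 0 < c) {m : ℕ → ℝ}
    (h : Tendsto (fun n : ℕ => log n / m n) atTop atTop) :
    Tendsto (fun n : ℕ => (n : ℝ) ^ (-(c / m n))) atTop (𝓝 0) := by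
  refine (tendsto_exp_neg_atTop_nhds_zero.comp (h.const_mul_atTop hc)).congr' ?_
  filter_upwards [eventually_gt_atTop 0] with n hn
  rw [Function.comp_apply, rpow_def_of_pos (by exact_mod_cast hn)]
  ring_nf

theorem cut_edges_sum_littleO_general (α β : ℝ)
    (hα0 : 0 < α) (hα1 : α < 1) (hβ0 : 0 < β)
    (m : ℕ → ℕ) (hm : ∀ n, 0 < m n)
    (hmo : (fun n : ℕ => (m n : ℝ)) =o[atTop] fun n : ℕ => Real.log n) :
    (fun n : ℕ =>
        ∑ i ∈ Finset.Icc 1 ⌊(1 / 2) * Real.logb 2 n - 2 * Real.logb 2 (Real.log n)⌋₊,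
          ((2 : ℝ) ^ (i : ℕ) * Real.sqrt n * (Real.log n) ^ 2)
              ^ (1 - ((m n : ℝ) + 1) * α / (m n))
            * (n : ℝ) ^ (1 - ((m n : ℝ) + 1) * β / (m n)))
      =o[atTop] fun n : ℕ => (n : ℝ) ^ (2 - α - β) := by
  set g : ℕ → ℝ := fun n => log n / (n : ℝ) ^ ((1 - α) / 2)
    + (n : ℝ) ^ (-((α + β) / m n)) / (1 - 2 ^ (-((1 - α) / 2)))
  have hlog : Tendsto (fun n : ℕ => log n / (m n : ℝ)) atTop atTop :=
    tendsto_div_atTop_of_isLittleO (.of_forall fun n => by exact_mod_cast hm n)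
      ((tendsto_log_atTop.comp tendsto_natCast_atTop_atTop).eventually_gt_atTop 0) hmo
  have hg : Tendsto g atTop (𝓝 0) := by
    simpa using ((isLittleO_log_rpow_atTop (by linarith)).tendsto_div_nhds_zero.comp
      tendsto_natCast_atTop_atTop).add
      ((tendsto_natCast_rpow_neg_div (by linarith) hlog).div_const _)
  have hbound : (fun n : ℕ => cutSum (1 - ((m n : ℝ) + 1) * α / (m n))
      (1 - ((m n : ℝ) + 1) * β / (m n)) n) =O[atTop] fun n => g n * (n : ℝ) ^ (2 - α - β) := by
    refine .of_bound' ?_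
    filter_upwards [eventually_ge_atTop 3] with n hn
    rw [norm_of_nonneg (cutSum_nonneg _ _ (Nat.cast_nonneg n))]
    exact (cutSum_le hα1 hβ0.le (by exact_mod_cast hm n) (by exact_mod_cast hn)).trans
      (le_norm_self _)
  -- `cutSum` unfolds to the sum in the statement, so `hbound` applies to it as is.
  refine hbound.trans_isLittleO ?_
  simpa only [one_mul] using ((isLittleO_one_iff ℝ).2 hg).mul_isBigO (isBigO_refl _ _)

/-- Geometric series tail estimate in the sparse-cut proof: with `m = o(log n)`
and `I = (1/2)log₂ n - 2 log₂ log n`, the sum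
`∑_{i=1}^{I} (2^i √n log² n)^{1-(m+1)α/m} · n^{1-(m+1)β/m}` is `o(n^{2-α-β})`. -/
theorem cut_edges_sum_littleO (α β : ℝ)
    (hα0 : 0 < α) (hα1 : α < 1) (hβ0 : 0 < β) (hβ1 : β < 1 - α)
    (m : ℕ → ℕ) (hm : ∀ n, 0 < m n)
    (hmo : (fun n : ℕ => (m n : ℝ)) =o[atTop] fun n : ℕ => Real.log n) :
    (fun n : ℕ =>
        ∑ i ∈ Finset.Icc 1 ⌊(1 / 2) * Real.logb 2 n - 2 * Real.logb 2 (Real.log n)⌋₊,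
          ((2 : ℝ) ^ (i : ℕ) * Real.sqrt n * (Real.log n) ^ 2)
              ^ (1 - ((m n : ℝ) + 1) * α / (m n))
            * (n : ℝ) ^ (1 - ((m n : ℝ) + 1) * β / (m n)))
      =o[atTop] fun n : ℕ => (n : ℝ) ^ (2 - α - β) :=
  cut_edges_sum_littleO_general α β hα0 hα1 hβ0 m hm hmo
end
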